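/- For any m₁×m₂ real matrix C with rank(C) ≤ r, one has ‖C‖²_{L₂(Π)} ≥ (κ₁² − ρ·r)·‖C‖₂², where κ₁ = κ₁(Π) and ρ = ρ(Π). -/

import Mathlib

open MeasureTheory ProbabilityTheory Matrix Real

noncomputable section

namespace MC

instance matMeasurableSpace {m n : Type*} : MeasurableSpace (Matrix m n ℝ) :=
  inferInstanceAs (MeasurableSpace (m → n → ℝ))

/-- Trace inner product `⟨A,B⟩ = tr(Aᵀ B)`. -/
def mip {m₁ m₂ : ℕ} (A B : Matrix (Fin m₁) (Fin m₂) ℝ) : ℝ := (Aᵀ * B).trace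

/-- Frobenius norm `‖A‖₂`. -/
def frob {m₁ m₂ : ℕ} (A : Matrix (Fin m₁) (Fin m₂) ℝ) : ℝ :=
  Real.sqrt (∑ i, ∑ j, (A i j) ^ 2)

/-- Euclidean norm of a vector. -/
def evnorm {m : ℕ} (v : Fin m → ℝ) : ℝ := Real.sqrt (∑ i, (v i) ^ 2)

/-- Spectral norm `‖A‖_∞` (largest singular value), as the `ℓ₂ → ℓ₂` operator norm. -/
def spec {m₁ m₂ : ℕ} (A : Matrix (Fin m₁) (Fin m₂) ℝ) : ℝ :=
  sSup {r | ∃ x : Fin m₂ → ℝ, evnorm x ≤ 1 ∧ r = evnorm (A.mulVec x)}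

/-- Nuclear norm `‖A‖₁` (sum of singular values), via trace duality with the spectral norm. -/
def nuc {m₁ m₂ : ℕ} (A : Matrix (Fin m₁) (Fin m₂) ℝ) : ℝ :=
  sSup {r | ∃ B : Matrix (Fin m₁) (Fin m₂) ℝ, spec B ≤ 1 ∧ r = mip A B}

/-- Entrywise expectation of a random matrix. -/
def mE {Ω : Type*} [MeasurableSpace Ω] {k l : ℕ} (μ : Measure Ω)
    (Z : Ω → Matrix (Fin k) (Fin l) ℝ) : Matrix (Fin k) (Fin l) ℝ :=
  fun i j => ∫ ω, Z ω i j ∂μ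

/-- `⟨A,B⟩_{L₂(Π)} = (1/n) Σᵢ E[⟨A,Xᵢ⟩⟨B,Xᵢ⟩]`. -/
def ipL2 {Ω : Type*} [MeasurableSpace Ω] {m₁ m₂ n : ℕ} (μ : Measure Ω)
    (X : Fin n → Ω → Matrix (Fin m₁) (Fin m₂) ℝ) (A B : Matrix (Fin m₁) (Fin m₂) ℝ) : ℝ :=
  (1 / n) * ∑ i, ∫ ω, mip A (X i ω) * mip B (X i ω) ∂μ

/-- `‖A‖²_{L₂(Π)} = (1/n) Σᵢ E[⟨A,Xᵢ⟩²]`. -/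
def nl2sq {Ω : Type*} [MeasurableSpace Ω] {m₁ m₂ n : ℕ} (μ : Measure Ω)
    (X : Fin n → Ω → Matrix (Fin m₁) (Fin m₂) ℝ) (A : Matrix (Fin m₁) (Fin m₂) ℝ) : ℝ :=
  ipL2 μ X A A

/-- `κ₁(Π) = inf{‖B‖_{L₂(Π)} : ‖B‖₂ = 1, rank(B) ≤ 1}`. -/
def kappa1 {Ω : Type*} [MeasurableSpace Ω] {m₁ m₂ n : ℕ} (μ : Measure Ω)
    (X : Fin n → Ω → Matrix (Fin m₁) (Fin m₂) ℝ) : ℝ :=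
  sInf {r | ∃ B : Matrix (Fin m₁) (Fin m₂) ℝ,
    frob B = 1 ∧ B.rank ≤ 1 ∧ r = Real.sqrt (nl2sq μ X B)}

/-- The coherence `ρ(Π) = sup{|⟨A,B⟩_{L₂(Π)}| / (‖A‖₁‖B‖₁) : A,B ≠ 0, ⟨A,B⟩ = 0}`. -/
def rho {Ω : Type*} [MeasurableSpace Ω] {m₁ m₂ n : ℕ} (μ : Measure Ω)
    (X : Fin n → Ω → Matrix (Fin m₁) (Fin m₂) ℝ) : ℝ :=
  sSup {r | ∃ A B : Matrix (Fin m₁) (Fin m₂) ℝ, A ≠ 0 ∧ B ≠ 0 ∧ mip A B = 0 ∧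
    r = |ipL2 μ X A B| / (nuc A * nuc B)}

/-! Diagonalising `Cᵀ C` writes `C = ∑_{k ∈ S} w_k v_kᵀ` with `|S| = rank C` and pairwise
orthogonal `w_k`, so the summands `D_k` are pairwise trace-orthogonal rank-one matrices with
`‖D_k‖₁ ≤ ‖D_k‖₂ =: f_k` and `‖C‖₂² = ∑ f_k²`. In the expansion
`‖C‖²_{L₂(Π)} = ∑_{k,l} ⟨D_k, D_l⟩_{L₂(Π)}` the diagonal terms are at least `κ₁² f_k²` by the
definition of `κ₁`, the off-diagonal ones at least `-ρ f_k f_l` by that of `ρ`, and Cauchy–Schwarz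
gives `(∑ f_k)² ≤ |S| ∑ f_k²`. -/

variable {m m₁ m₂ : ℕ}

lemma evnorm_eq_norm (v : Fin m → ℝ) :
    evnorm v = ‖(WithLp.toLp 2 v : EuclideanSpace ℝ (Fin m))‖ := by
  simp [evnorm, EuclideanSpace.norm_eq]

lemma evnorm_nonneg (v : Fin m → ℝ) : 0 ≤ evnorm v := Real.sqrt_nonneg _

lemma evnorm_sq (v : Fin m → ℝ) : evnorm v ^ 2 = v ⬝ᵥ v := by
  rw [evnorm, Real.sq_sqrt (by positivity)]
  simp [dotProduct, sq]

lemma evnorm_pos {v : Fin m → ℝ} (hv : v ≠ 0) : 0 < evnorm v := by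
  rw [evnorm_eq_norm, norm_pos_iff]
  simpa using hv

lemma evnorm_smul (c : ℝ) (v : Fin m → ℝ) : evnorm (c • v) = |c| * evnorm v := by
  simp [evnorm_eq_norm, WithLp.toLp_smul, norm_smul]

lemma dotProduct_le_evnorm_mul (v w : Fin m → ℝ) : v ⬝ᵥ w ≤ evnorm v * evnorm w := by
  rw [evnorm_eq_norm, evnorm_eq_norm, mul_comm]
  simpa [EuclideanSpace.inner_toLp_toLp] using
    real_inner_le_norm (WithLp.toLp 2 w) (WithLp.toLp 2 v)

lemma abs_le_evnorm (v : Fin m → ℝ) (i : Fin m) : |v i| ≤ evnorm v := by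
  simpa [evnorm_eq_norm] using PiLp.norm_apply_le (WithLp.toLp 2 v) i

lemma evnorm_single (i : Fin m) : evnorm (Pi.single i 1) = 1 := by
  simp [evnorm_eq_norm]

abbrev euclideanVec (A : Matrix (Fin m₁) (Fin m₂) ℝ) : EuclideanSpace ℝ (Fin m₂ × Fin m₁) :=
  WithLp.toLp 2 A.vec

lemma euclideanVec_smul (c : ℝ) (A : Matrix (Fin m₁) (Fin m₂) ℝ) :
    euclideanVec (c • A) = c • euclideanVec A := rfl

lemma euclideanVec_sum {ι : Type*} (s : Finset ι) (A : ι → Matrix (Fin m₁) (Fin m₂) ℝ) :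
    euclideanVec (∑ k ∈ s, A k) = ∑ k ∈ s, euclideanVec (A k) := by
  simp [euclideanVec, Matrix.vec_sum]

lemma mip_eq_inner (A B : Matrix (Fin m₁) (Fin m₂) ℝ) :
    mip A B = inner ℝ (euclideanVec A) (euclideanVec B) := by
  rw [EuclideanSpace.inner_toLp_toLp, star_trivial, dotProduct_comm, vec_dotProduct_vec, mip]

lemma frob_eq_norm (A : Matrix (Fin m₁) (Fin m₂) ℝ) : frob A = ‖euclideanVec A‖ := by
  simp [frob, EuclideanSpace.norm_eq, Fintype.sum_prod_type, Finset.sum_comm (γ := Fin m₁)]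

lemma mip_eq_sum (A B : Matrix (Fin m₁) (Fin m₂) ℝ) : mip A B = ∑ i, ∑ j, A i j * B i j := by
  rw [mip, Matrix.trace, Finset.sum_comm]
  simp [Matrix.mul_apply]

lemma mip_comm (A B : Matrix (Fin m₁) (Fin m₂) ℝ) : mip A B = mip B A := by
  rw [mip_eq_inner, mip_eq_inner, real_inner_comm]

lemma mip_smul_left (c : ℝ) (A B : Matrix (Fin m₁) (Fin m₂) ℝ) : mip (c • A) B = c * mip A B := by
  simp [mip]

lemma mip_sum_left {ι : Type*} (s : Finset ι) (A : ι → Matrix (Fin m₁) (Fin m₂) ℝ)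
    (B : Matrix (Fin m₁) (Fin m₂) ℝ) : mip (∑ k ∈ s, A k) B = ∑ k ∈ s, mip (A k) B := by
  simp only [mip_eq_inner, euclideanVec_sum, sum_inner]

lemma mip_vecMulVec_left (w : Fin m₁ → ℝ) (v : Fin m₂ → ℝ) (B : Matrix (Fin m₁) (Fin m₂) ℝ) :
    mip (vecMulVec w v) B = w ⬝ᵥ (B *ᵥ v) := by
  simp only [mip_eq_sum, vecMulVec_apply, dotProduct, mulVec, Finset.mul_sum]
  exact Finset.sum_congr rfl fun i _ => Finset.sum_congr rfl fun j _ => by ring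

lemma mip_vecMulVec (w w' : Fin m₁ → ℝ) (v v' : Fin m₂ → ℝ) :
    mip (vecMulVec w v) (vecMulVec w' v') = (w ⬝ᵥ w') * (v ⬝ᵥ v') := by
  rw [mip_vecMulVec_left, vecMulVec_mulVec, dotProduct_comm v']
  simp [dotProduct_smul, mul_comm]

lemma frob_nonneg (A : Matrix (Fin m₁) (Fin m₂) ℝ) : 0 ≤ frob A := Real.sqrt_nonneg _

lemma frob_sq (A : Matrix (Fin m₁) (Fin m₂) ℝ) : frob A ^ 2 = mip A A := by
  rw [frob_eq_norm, mip_eq_inner, real_inner_self_eq_norm_sq]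

lemma frob_zero : frob (0 : Matrix (Fin m₁) (Fin m₂) ℝ) = 0 := by
  simp [frob]

lemma frob_pos {A : Matrix (Fin m₁) (Fin m₂) ℝ} (hA : A ≠ 0) : 0 < frob A := by
  rw [frob_eq_norm, norm_pos_iff]
  simpa using hA

lemma frob_smul (c : ℝ) (A : Matrix (Fin m₁) (Fin m₂) ℝ) : frob (c • A) = |c| * frob A := by
  rw [frob_eq_norm, frob_eq_norm, euclideanVec_smul, norm_smul, Real.norm_eq_abs]

lemma abs_mip_le (A B : Matrix (Fin m₁) (Fin m₂) ℝ) : |mip A B| ≤ frob A * frob B := by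
  rw [mip_eq_inner, frob_eq_norm, frob_eq_norm]
  exact abs_real_inner_le_norm _ _

lemma frob_vecMulVec (w : Fin m₁ → ℝ) (v : Fin m₂ → ℝ) :
    frob (vecMulVec w v) = evnorm w * evnorm v := by
  rw [← sq_eq_sq₀ (frob_nonneg _) (mul_nonneg (evnorm_nonneg w) (evnorm_nonneg v)), frob_sq,
    mip_vecMulVec, mul_pow, evnorm_sq, evnorm_sq]

lemma evnorm_mulVec_le_frob (A : Matrix (Fin m₁) (Fin m₂) ℝ) (x : Fin m₂ → ℝ) :
    evnorm (A *ᵥ x) ≤ frob A * evnorm x := by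
  have h : evnorm (A *ᵥ x) ^ 2 ≤ evnorm (A *ᵥ x) * (frob A * evnorm x) :=
    calc evnorm (A *ᵥ x) ^ 2 = mip (vecMulVec (A *ᵥ x) x) A := by
          rw [evnorm_sq, mip_vecMulVec_left]
      _ ≤ frob (vecMulVec (A *ᵥ x) x) * frob A := (le_abs_self _).trans (abs_mip_le _ _)
      _ = evnorm (A *ᵥ x) * (frob A * evnorm x) := by rw [frob_vecMulVec]; ring
  nlinarith [evnorm_nonneg (A *ᵥ x), mul_nonneg (frob_nonneg A) (evnorm_nonneg x)]

lemma spec_bddAbove (A : Matrix (Fin m₁) (Fin m₂) ℝ) :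
    BddAbove {r | ∃ x : Fin m₂ → ℝ, evnorm x ≤ 1 ∧ r = evnorm (A *ᵥ x)} := by
  refine ⟨frob A, ?_⟩
  rintro r ⟨x, hx, rfl⟩
  calc evnorm (A *ᵥ x) ≤ frob A * evnorm x := evnorm_mulVec_le_frob A x
    _ ≤ frob A := mul_le_of_le_one_right (frob_nonneg A) hx

lemma spec_le_frob (A : Matrix (Fin m₁) (Fin m₂) ℝ) : spec A ≤ frob A := by
  refine csSup_le ⟨_, 0, by simp [evnorm], rfl⟩ ?_
  rintro r ⟨x, hx, rfl⟩
  exact (evnorm_mulVec_le_frob A x).trans (mul_le_of_le_one_right (frob_nonneg A) hx)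

lemma evnorm_mulVec_le_spec (A : Matrix (Fin m₁) (Fin m₂) ℝ) (x : Fin m₂ → ℝ) :
    evnorm (A *ᵥ x) ≤ spec A * evnorm x := by
  rcases eq_or_ne x 0 with rfl | hx
  · simp [evnorm]
  have hpos := evnorm_pos hx
  have hunit : evnorm ((evnorm x)⁻¹ • x) ≤ 1 := by
    rw [evnorm_smul, abs_of_pos (inv_pos.2 hpos), inv_mul_cancel₀ hpos.ne']
  have h := le_csSup (spec_bddAbove A) ⟨_, hunit, rfl⟩
  rw [mulVec_smul, evnorm_smul, abs_of_pos (inv_pos.2 hpos), inv_mul_le_iff₀ hpos] at h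
  rwa [mul_comm] at h

lemma abs_apply_le_spec (A : Matrix (Fin m₁) (Fin m₂) ℝ) (i : Fin m₁) (j : Fin m₂) :
    |A i j| ≤ spec A := by
  have h := evnorm_mulVec_le_spec A (Pi.single j 1)
  rw [evnorm_single, mul_one] at h
  calc |A i j| = |(A *ᵥ Pi.single j 1) i| := by simp
    _ ≤ spec A := (abs_le_evnorm _ i).trans h

lemma spec_zero : spec (0 : Matrix (Fin m₁) (Fin m₂) ℝ) = 0 :=
  le_antisymm ((spec_le_frob 0).trans_eq frob_zero)
    (le_csSup (spec_bddAbove 0) ⟨0, by simp [evnorm], by simp [evnorm]⟩)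

lemma nuc_bddAbove (A : Matrix (Fin m₁) (Fin m₂) ℝ) :
    BddAbove {r | ∃ B : Matrix (Fin m₁) (Fin m₂) ℝ, spec B ≤ 1 ∧ r = mip A B} := by
  refine ⟨∑ i, ∑ j, |A i j|, ?_⟩
  rintro r ⟨B, hB, rfl⟩
  rw [mip_eq_sum]
  gcongr with i _ j _
  calc A i j * B i j ≤ |A i j| * |B i j| := by rw [← abs_mul]; exact le_abs_self _
    _ ≤ |A i j| := mul_le_of_le_one_right (abs_nonneg _) ((abs_apply_le_spec B i j).trans hB)

lemma le_nuc {A B : Matrix (Fin m₁) (Fin m₂) ℝ} (hB : spec B ≤ 1) : mip A B ≤ nuc A :=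
  le_csSup (nuc_bddAbove A) ⟨B, hB, rfl⟩

lemma nuc_nonneg (A : Matrix (Fin m₁) (Fin m₂) ℝ) : 0 ≤ nuc A := by
  simpa [mip, spec_zero] using le_nuc (A := A) (B := 0) (by simp [spec_zero])

lemma frob_le_nuc (A : Matrix (Fin m₁) (Fin m₂) ℝ) : frob A ≤ nuc A := by
  rcases eq_or_ne A 0 with rfl | hA
  · exact frob_zero.trans_le (nuc_nonneg 0)
  have hpos := frob_pos hA
  have hspec : spec ((frob A)⁻¹ • A) ≤ 1 := by
    refine (spec_le_frob _).trans_eq ?_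
    rw [frob_smul, abs_of_pos (inv_pos.2 hpos), inv_mul_cancel₀ hpos.ne']
  have h := le_nuc (A := A) hspec
  rwa [mip_comm, mip_smul_left, ← frob_sq, sq, ← mul_assoc, inv_mul_cancel₀ hpos.ne',
    one_mul] at h

lemma nuc_vecMulVec_le (w : Fin m₁ → ℝ) (v : Fin m₂ → ℝ) :
    nuc (vecMulVec w v) ≤ evnorm w * evnorm v := by
  refine csSup_le ⟨_, 0, by simp [spec_zero], rfl⟩ ?_
  rintro r ⟨B, hB, rfl⟩
  calc mip (vecMulVec w v) B = w ⬝ᵥ (B *ᵥ v) := mip_vecMulVec_left w v B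
    _ ≤ evnorm w * evnorm (B *ᵥ v) := dotProduct_le_evnorm_mul _ _
    _ ≤ evnorm w * (spec B * evnorm v) :=
        mul_le_mul_of_nonneg_left (evnorm_mulVec_le_spec B v) (evnorm_nonneg w)
    _ ≤ evnorm w * evnorm v :=
        mul_le_mul_of_nonneg_left (mul_le_of_le_one_left (evnorm_nonneg v) hB) (evnorm_nonneg w)

lemma frob_sum_vecMulVec_sq {ι : Type*} {s : Finset ι} {w : ι → Fin m₁ → ℝ}
    {v : ι → Fin m₂ → ℝ}
    (horth : (s : Set ι).Pairwise fun k l => w k ⬝ᵥ w l = 0) :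
    frob (∑ k ∈ s, vecMulVec (w k) (v k)) ^ 2 = ∑ k ∈ s, frob (vecMulVec (w k) (v k)) ^ 2 := by
  simp only [frob_sq, mip_sum_left]
  refine Finset.sum_congr rfl fun k hk => ?_
  rw [mip_comm, mip_sum_left, Finset.sum_eq_single_of_mem k hk, mip_comm]
  intro l hl hlk
  rw [mip_vecMulVec, horth hl hk hlk, zero_mul]

lemma mip_single_left (a : Fin m₁) (b : Fin m₂) (c : ℝ) (B : Matrix (Fin m₁) (Fin m₂) ℝ) :
    mip (Matrix.single a b c) B = c * B a b := by
  simp [mip_eq_sum, Matrix.single_apply, ite_and, Finset.sum_ite_eq]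

section L2

variable {Ω : Type*} [MeasurableSpace Ω] {n : ℕ} (μ : Measure Ω)
  (X : Fin n → Ω → Matrix (Fin m₁) (Fin m₂) ℝ)

def HasFiniteSecondMoments : Prop :=
  ∀ i A B, Integrable (fun ω => mip A (X i ω) * mip B (X i ω)) μ

lemma nl2sq_nonneg (A : Matrix (Fin m₁) (Fin m₂) ℝ) : 0 ≤ nl2sq μ X A :=
  mul_nonneg (by positivity)
    (Finset.sum_nonneg fun _ _ => integral_nonneg fun _ => mul_self_nonneg _)

lemma nl2sq_smul (c : ℝ) (A : Matrix (Fin m₁) (Fin m₂) ℝ) :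
    nl2sq μ X (c • A) = c ^ 2 * nl2sq μ X A := by
  simp only [nl2sq, ipL2, mip_smul_left, Finset.mul_sum, ← integral_const_mul]
  congr! 3 with i _ ω
  ring

lemma nl2sq_sum
    (hX : HasFiniteSecondMoments μ X)
    {ι : Type*} (s : Finset ι) (A : ι → Matrix (Fin m₁) (Fin m₂) ℝ) :
    nl2sq μ X (∑ k ∈ s, A k) = ∑ k ∈ s, ∑ l ∈ s, ipL2 μ X (A k) (A l) := by
  have hexp : ∀ i, ∫ ω, mip (∑ k ∈ s, A k) (X i ω) * mip (∑ k ∈ s, A k) (X i ω) ∂μ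
      = ∑ k ∈ s, ∑ l ∈ s, ∫ ω, mip (A k) (X i ω) * mip (A l) (X i ω) ∂μ := by
    intro i
    simp only [mip_sum_left, Finset.sum_mul_sum]
    rw [integral_finsetSum _ fun k _ => integrable_finsetSum _ fun l _ => hX i (A k) (A l)]
    exact Finset.sum_congr rfl fun k _ => integral_finsetSum _ fun l _ => hX i (A k) (A l)
  simp only [nl2sq, ipL2, hexp, Finset.mul_sum]
  rw [Finset.sum_comm]
  exact Finset.sum_congr rfl fun k _ => Finset.sum_comm

lemma integrable_frob_sq
    (hX : HasFiniteSecondMoments μ X) (i : Fin n) :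
    Integrable (fun ω => frob (X i ω) ^ 2) μ := by
  simp_rw [frob_sq, mip_eq_sum]
  refine integrable_finsetSum _ fun a _ => integrable_finsetSum _ fun b _ => ?_
  simpa [mip_single_left] using hX i (Matrix.single a b 1) (Matrix.single a b 1)

lemma abs_ipL2_le
    (hX : HasFiniteSecondMoments μ X)
    (A B : Matrix (Fin m₁) (Fin m₂) ℝ) :
    |ipL2 μ X A B| ≤ frob A * frob B * ((1 / n) * ∑ i, ∫ ω, frob (X i ω) ^ 2 ∂μ) := by
  have hpt : ∀ i ω, |mip A (X i ω) * mip B (X i ω)| ≤ frob A * frob B * frob (X i ω) ^ 2 :=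
    fun i ω => by
      rw [abs_mul]
      calc |mip A (X i ω)| * |mip B (X i ω)|
          ≤ (frob A * frob (X i ω)) * (frob B * frob (X i ω)) :=
            mul_le_mul (abs_mip_le _ _) (abs_mip_le _ _) (abs_nonneg _)
              (mul_nonneg (frob_nonneg _) (frob_nonneg _))
        _ = frob A * frob B * frob (X i ω) ^ 2 := by ring
  rw [ipL2, abs_mul, abs_of_nonneg (by positivity), mul_left_comm, Finset.mul_sum]
  gcongr
  refine (Finset.abs_sum_le_sum_abs _ _).trans (Finset.sum_le_sum fun i _ => ?_)
  rw [← integral_const_mul]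
  exact (abs_integral_le_integral_abs).trans
    (integral_mono (hX i A B).abs ((integrable_frob_sq μ X hX i).const_mul _) (hpt i))

lemma rho_bddAbove
    (hX : HasFiniteSecondMoments μ X) :
    BddAbove {r | ∃ A B : Matrix (Fin m₁) (Fin m₂) ℝ, A ≠ 0 ∧ B ≠ 0 ∧ mip A B = 0 ∧
      r = |ipL2 μ X A B| / (nuc A * nuc B)} := by
  set K := (1 / n : ℝ) * ∑ i, ∫ ω, frob (X i ω) ^ 2 ∂μ
  have hK : 0 ≤ K := mul_nonneg (by positivity)
    (Finset.sum_nonneg fun _ _ => integral_nonneg fun _ => sq_nonneg _)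
  refine ⟨K, ?_⟩
  rintro r ⟨A, B, hA, hB, -, rfl⟩
  have hnucA := (frob_pos hA).trans_le (frob_le_nuc A)
  have hnucB := (frob_pos hB).trans_le (frob_le_nuc B)
  rw [div_le_iff₀ (mul_pos hnucA hnucB), mul_comm K]
  calc |ipL2 μ X A B| ≤ frob A * frob B * K := abs_ipL2_le μ X hX A B
    _ ≤ nuc A * nuc B * K := by gcongr <;> first | exact frob_nonneg _ | exact frob_le_nuc _

lemma rho_nonneg : 0 ≤ rho μ X := by
  refine Real.sSup_nonneg ?_
  rintro r ⟨A, B, -, -, -, rfl⟩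
  exact div_nonneg (abs_nonneg _) (mul_nonneg (nuc_nonneg A) (nuc_nonneg B))

lemma kappa1_nonneg : 0 ≤ kappa1 μ X := by
  refine Real.sInf_nonneg ?_
  rintro r ⟨B, -, -, rfl⟩
  exact Real.sqrt_nonneg _

lemma kappa1_sq_mul_frob_sq_le {B : Matrix (Fin m₁) (Fin m₂) ℝ} (hB : B.rank ≤ 1) :
    kappa1 μ X ^ 2 * frob B ^ 2 ≤ nl2sq μ X B := by
  rcases eq_or_ne B 0 with rfl | hB0
  · simpa [frob_zero] using nl2sq_nonneg μ X 0
  have hpos := frob_pos hB0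
  set B₁ := (frob B)⁻¹ • B
  have hfrob : frob B₁ = 1 := by
    rw [frob_smul, abs_of_pos (inv_pos.2 hpos), inv_mul_cancel₀ hpos.ne']
  have hrank : B₁.rank ≤ 1 := by
    rwa [rank_smul_of_mem_nonZeroDivisors B
      (mem_nonZeroDivisors_of_ne_zero (inv_ne_zero hpos.ne'))]
  have hle : kappa1 μ X ≤ √(nl2sq μ X B₁) :=
    csInf_le ⟨0, fun _ ⟨_, _, _, hr⟩ => hr ▸ Real.sqrt_nonneg _⟩ ⟨B₁, hfrob, hrank, rfl⟩
  have hsq := pow_le_pow_left₀ (kappa1_nonneg μ X) hle 2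
  rw [Real.sq_sqrt (nl2sq_nonneg μ X _), nl2sq_smul, inv_pow, inv_mul_eq_div,
    le_div_iff₀ (by positivity)] at hsq
  exact hsq

lemma abs_ipL2_le_rho_mul
    (hX : HasFiniteSecondMoments μ X)
    {A B : Matrix (Fin m₁) (Fin m₂) ℝ} (hAB : mip A B = 0) :
    |ipL2 μ X A B| ≤ rho μ X * (nuc A * nuc B) := by
  by_cases h0 : A = 0 ∨ B = 0
  · have hzero : ipL2 μ X A B = 0 := by rcases h0 with rfl | rfl <;> simp [ipL2, mip]
    rw [hzero, abs_zero]
    exact mul_nonneg (rho_nonneg μ X) (mul_nonneg (nuc_nonneg A) (nuc_nonneg B))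
  obtain ⟨hA, hB⟩ := not_or.1 h0
  have hnuc : 0 < nuc A * nuc B :=
    mul_pos ((frob_pos hA).trans_le (frob_le_nuc A)) ((frob_pos hB).trans_le (frob_le_nuc B))
  rw [← div_le_iff₀ hnuc]
  exact le_csSup (rho_bddAbove μ X hX) ⟨A, B, hA, hB, hAB, rfl⟩

lemma le_nl2sq_sum_vecMulVec
    (hX : HasFiniteSecondMoments μ X)
    {ι : Type*} (s : Finset ι) (w : ι → Fin m₁ → ℝ) (v : ι → Fin m₂ → ℝ)
    (horth : (s : Set ι).Pairwise fun k l => w k ⬝ᵥ w l = 0) :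
    (kappa1 μ X ^ 2 - rho μ X * s.card) * ∑ k ∈ s, frob (vecMulVec (w k) (v k)) ^ 2 ≤
      nl2sq μ X (∑ k ∈ s, vecMulVec (w k) (v k)) := by
  classical
  set D := fun k => vecMulVec (w k) (v k)
  set f := fun k => frob (D k)
  set κ := kappa1 μ X
  set ρ := rho μ X
  have hρ := rho_nonneg μ X
  have hterm : ∀ k ∈ s, ∀ l ∈ s,
      (if k = l then κ ^ 2 * f k ^ 2 else 0) - ρ * (f k * f l) ≤ ipL2 μ X (D k) (D l) := by
    intro k hk l hl
    -- on the diagonal `ρ f_k² ≥ 0` is given away, so that every term has the same shape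
    split_ifs with hkl
    · subst hkl
      have := kappa1_sq_mul_frob_sq_le μ X (rank_vecMulVec_le (w k) (v k))
      have : 0 ≤ ρ * (f k * f k) := mul_nonneg hρ (mul_self_nonneg _)
      change _ ≤ nl2sq μ X (D k)
      linarith
    · have habs := abs_ipL2_le_rho_mul μ X hX (A := D k) (B := D l)
        (by rw [mip_vecMulVec, horth hk hl hkl, zero_mul])
      have hnuc : ∀ k, nuc (D k) ≤ f k := fun k =>
        (nuc_vecMulVec_le _ _).trans_eq (frob_vecMulVec _ _).symm
      have : ρ * (nuc (D k) * nuc (D l)) ≤ ρ * (f k * f l) :=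
        mul_le_mul_of_nonneg_left
          (mul_le_mul (hnuc k) (hnuc l) (nuc_nonneg _) ((nuc_nonneg _).trans (hnuc k))) hρ
      linarith [neg_abs_le (ipL2 μ X (D k) (D l))]
  have hsum := Finset.sum_le_sum fun k hk => Finset.sum_le_sum fun l hl => hterm k hk l hl
  rw [← nl2sq_sum μ X hX] at hsum
  have hexpand : ∑ k ∈ s, ∑ l ∈ s, ((if k = l then κ ^ 2 * f k ^ 2 else 0) - ρ * (f k * f l)) =
      κ ^ 2 * ∑ k ∈ s, f k ^ 2 - ρ * (∑ k ∈ s, f k) ^ 2 := by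
    rw [sq (∑ k ∈ s, f k), Finset.sum_mul_sum, Finset.mul_sum, Finset.mul_sum]
    simp [Finset.sum_sub_distrib, Finset.mul_sum, sq]
  have hcs : (∑ k ∈ s, f k) ^ 2 ≤ s.card * ∑ k ∈ s, f k ^ 2 := sq_sum_le_card_mul_sum_sq
  calc (κ ^ 2 - ρ * s.card) * ∑ k ∈ s, f k ^ 2
      ≤ κ ^ 2 * ∑ k ∈ s, f k ^ 2 - ρ * (∑ k ∈ s, f k) ^ 2 := by nlinarith
    _ ≤ nl2sq μ X (∑ k ∈ s, D k) := hexpand ▸ hsum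

end L2

lemma sum_vecMulVec_mulVec_orthonormalBasis {ι : Type*} [Fintype ι]
    (b : OrthonormalBasis ι ℝ (EuclideanSpace ℝ (Fin m₂))) (C : Matrix (Fin m₁) (Fin m₂) ℝ) :
    ∑ k, vecMulVec (C *ᵥ b k) (b k) = C := by
  ext i j
  have h := congrArg (fun x : EuclideanSpace ℝ (Fin m₂) => x j)
    (b.sum_repr' (WithLp.toLp 2 (C i)))
  simpa [Matrix.sum_apply, vecMulVec_apply, EuclideanSpace.inner_eq_star_dotProduct, mulVec]
    using h

lemma isHermitian_transpose_mul_self (C : Matrix (Fin m₁) (Fin m₂) ℝ) :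
    (Cᵀ * C).IsHermitian := by
  simpa using isHermitian_conjTranspose_mul_self C

lemma dotProduct_mulVec_eigenvectorBasis (C : Matrix (Fin m₁) (Fin m₂) ℝ) (k l : Fin m₂) :
    (C *ᵥ (isHermitian_transpose_mul_self C).eigenvectorBasis k) ⬝ᵥ
      (C *ᵥ (isHermitian_transpose_mul_self C).eigenvectorBasis l) =
      if k = l then (isHermitian_transpose_mul_self C).eigenvalues k else 0 := by
  set hC := isHermitian_transpose_mul_self C
  set b := hC.eigenvectorBasis
  have hon : ⇑(b k) ⬝ᵥ ⇑(b l) = if k = l then 1 else 0 := by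
    simpa [EuclideanSpace.inner_eq_star_dotProduct, dotProduct_comm] using
      orthonormal_iff_ite.1 b.orthonormal k l
  rw [← vecMul_transpose C (b k), ← dotProduct_mulVec, mulVec_mulVec, hC.mulVec_eigenvectorBasis,
    dotProduct_smul, hon]
  split_ifs with h <;> simp [h]

lemma exists_sum_vecMulVec (C : Matrix (Fin m₁) (Fin m₂) ℝ) :
    ∃ (s : Finset (Fin m₂)) (w : Fin m₂ → Fin m₁ → ℝ) (v : Fin m₂ → Fin m₂ → ℝ),
      s.card = C.rank ∧ Pairwise (fun k l => w k ⬝ᵥ w l = 0) ∧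
      ∑ k ∈ s, vecMulVec (w k) (v k) = C := by
  set hC := isHermitian_transpose_mul_self C
  set b := hC.eigenvectorBasis
  have hdot := dotProduct_mulVec_eigenvectorBasis C
  refine ⟨Finset.univ.filter fun k => hC.eigenvalues k ≠ 0, fun k => C *ᵥ b k, fun k => b k,
    ?_, fun k l hkl => by simpa [hkl] using hdot k l, ?_⟩
  · rw [← rank_transpose_mul_self, hC.rank_eq_card_non_zero_eigs, Fintype.card_subtype]
  · conv_rhs => rw [← sum_vecMulVec_mulVec_orthonormalBasis b C]
    refine Finset.sum_subset (Finset.subset_univ _) fun k _ hk => ?_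
    have hk' : hC.eigenvalues k = 0 := by simpa using hk
    have : C *ᵥ b k = 0 := dotProduct_self_eq_zero.1 ((hdot k k).trans (by rw [if_pos rfl, hk']))
    simp [this]

theorem nl2sq_lower_of_rank_le_general {m₁ m₂ n : ℕ}
    {Ω : Type*} [MeasurableSpace Ω] (μ : Measure Ω)
    (X : Fin n → Ω → Matrix (Fin m₁) (Fin m₂) ℝ)
    (hInt : ∀ (i : Fin n) (A B : Matrix (Fin m₁) (Fin m₂) ℝ),
      Integrable (fun ω => mip A (X i ω) * mip B (X i ω)) μ)
    (r : ℕ) (C : Matrix (Fin m₁) (Fin m₂) ℝ) (hrank : C.rank ≤ r) :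
    ((kappa1 μ X) ^ 2 - rho μ X * r) * (frob C) ^ 2 ≤ nl2sq μ X C := by
  obtain ⟨s, w, v, hcard, horth, rfl⟩ := exists_sum_vecMulVec C
  have hs : (s.card : ℝ) ≤ r := by exact_mod_cast hcard.trans_le hrank
  rw [frob_sum_vecMulVec_sq (horth.set_pairwise _)]
  calc ((kappa1 μ X) ^ 2 - rho μ X * r) * ∑ k ∈ s, frob (vecMulVec (w k) (v k)) ^ 2
      ≤ ((kappa1 μ X) ^ 2 - rho μ X * s.card) * ∑ k ∈ s, frob (vecMulVec (w k) (v k)) ^ 2 := by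
        have := rho_nonneg μ X
        gcongr
    _ ≤ _ := le_nl2sq_sum_vecMulVec μ X hInt s w v (horth.set_pairwise _)

/-- for every matrix `C` with `rank(C) ≤ r`,
`‖C‖²_{L₂(Π)} ≥ (κ₁² - ρ r) ‖C‖₂²`. -/
theorem nl2sq_lower_of_rank_le {m₁ m₂ n : ℕ} (hn : 0 < n)
    {Ω : Type*} [MeasurableSpace Ω] (μ : Measure Ω) [IsProbabilityMeasure μ]
    (X : Fin n → Ω → Matrix (Fin m₁) (Fin m₂) ℝ)
    (hmeas : ∀ i, Measurable (X i))
    (hInt : ∀ (i : Fin n) (A B : Matrix (Fin m₁) (Fin m₂) ℝ),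
      Integrable (fun ω => mip A (X i ω) * mip B (X i ω)) μ)
    (r : ℕ) (C : Matrix (Fin m₁) (Fin m₂) ℝ) (hrank : C.rank ≤ r) :
    ((kappa1 μ X) ^ 2 - rho μ X * r) * (frob C) ^ 2 ≤ nl2sq μ X C :=
  nl2sq_lower_of_rank_le_general μ X hInt r C hrank

end MC
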